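/- Let t^a ∈ S be a monomial, let i ≠ j be indices in {1,…,r}, and let u ∈ P_i. Let Δ denote the total weight in H_{t^a} of the edges joining two vertices of V_G ∖ P_j (i.e., Δ = Σ a_e over edges e = {w,w'} of G with w, w' ∉ P_j), and for a monomial t^c let δ(c) denote the total weight in H_{t^c} of the edges joining u to a vertex of V_G ∖ P_j (i.e., δ(c) = Σ c_e over edges e = {u,w} of G with w ∉ P_j). Suppose there exists an edge {w_1,w_2} of H_{t^a} (i.e., a_{{w_1,w_2}} ≥ 1) with w_1, w_2 ∉ P_j and w_1 ≠ u, w_2 ≠ u. Then there exists a monomial t^b ∈ S such that t^a − t^b ∈ I(X), wt_{t^b}(v) = wt_{t^a}(v) for every vertex v of G, and δ(b) = min{wt_{t^a}(u), Δ}. -/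

import Mathlib

open MvPolynomial

/-- The value `x^e = x_i * x_j` of an unordered pair `e = {i,j}` of vertices. -/
noncomputable def edgeVal {V K : Type*} [CommMonoid K] (x : V → K) (e : Sym2 V) : K :=
  Sym2.lift ⟨fun i j => x i * x j, fun i j => mul_comm _ _⟩ e

/-- The vanishing ideal `I(X)` of the algebraic toric set `X` parameterized by the
edges of the graph `G`: the ideal generated by all homogeneous polynomials vanishing
on all points `(x^{e_1}, …, x^{e_s})` with `x ∈ (K*)^n`. -/
noncomputable def vanishingIdeal (K : Type*) [Field K] {V : Type*} (G : SimpleGraph V) :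
    Ideal (MvPolynomial G.edgeSet K) :=
  Ideal.span {f | (∃ d, f.IsHomogeneous d) ∧
    ∀ x : V → Kˣ,
      MvPolynomial.eval (fun e : G.edgeSet => edgeVal (fun v => (x v : K)) (e : Sym2 V)) f = 0}

/-- The weighted degree of a vertex `v` in the weighted subgraph `H_{t^a}` of `G`
associated to the monomial `t^a`. -/
noncomputable def wt {V : Type*} [DecidableEq V] (G : SimpleGraph V) [Fintype G.edgeSet]
    (a : G.edgeSet →₀ ℕ) (v : V) : ℕ :=
  ∑ e : G.edgeSet, if v ∈ (e : Sym2 V) then a e else 0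
open scoped Classical

/-- The total weight, in the weighted subgraph `H_{t^a}`, of the edges both of whose
endpoints avoid the part `p⁻¹(j)`. -/
noncomputable def totalWtAvoiding {V ι : Type*} (G : SimpleGraph V) [Fintype G.edgeSet]
    (p : V → ι) (j : ι) (a : G.edgeSet →₀ ℕ) : ℕ :=
  ∑ e : G.edgeSet, if ∀ v ∈ (e : Sym2 V), p v ≠ j then a e else 0

/-- The total weight, in the weighted subgraph `H_{t^a}`, of the edges incident to `u`
whose endpoints all avoid the part `p⁻¹(j)`. -/
noncomputable def wtAtAvoiding {V ι : Type*} (G : SimpleGraph V) [Fintype G.edgeSet]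
    (p : V → ι) (j : ι) (u : V) (a : G.edgeSet →₀ ℕ) : ℕ :=
  ∑ e : G.edgeSet, if u ∈ (e : Sym2 V) ∧ ∀ v ∈ (e : Sym2 V), p v ≠ j then a e else 0

/-!
A binomial `t^a - t^b` whose two monomials give every vertex the same weighted degree lies in
`I(X)`: both monomials evaluate to `∏ v, x_v ^ wt(v)`, and have the same total degree
`½ ∑ v, wt(v)`. As long as `δ(a) < min (wt_a(u)) Δ`, `H_{t^a}` has an edge `{u, z}` with
`z ∈ P_j` and an edge `{w, w'}` avoiding both `P_j` and `u`, with `w ∉ P_i` after relabelling.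
Trading them for `{u, w}` and `{z, w'}` keeps all weighted degrees and `Δ`, and raises `δ` by one.
-/

section WeightOn

variable {E : Type*} [Fintype E]

noncomputable def weightOn (P : E → Prop) [DecidablePred P] (a : E →₀ ℕ) : ℕ :=
  ∑ e, if P e then a e else 0

variable (P Q : E → Prop) [DecidablePred P] [DecidablePred Q]

lemma weightOn_add (a b : E →₀ ℕ) : weightOn P (a + b) = weightOn P a + weightOn P b := by
  simp only [weightOn, Finsupp.add_apply, ite_add_zero, Finset.sum_add_distrib]

lemma weightOn_single_one (f : E) :
    weightOn P (Finsupp.single f 1) = if P f then 1 else 0 := by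
  rw [weightOn, Finset.sum_eq_single f (fun e _ he => by simp [he]) (by simp)]
  simp

lemma weightOn_mono (hPQ : ∀ e, P e → Q e) (a : E →₀ ℕ) : weightOn P a ≤ weightOn Q a :=
  Finset.sum_le_sum fun e _ => by split_ifs <;> simp_all

lemma exists_pos_of_weightOn_lt {a : E →₀ ℕ} (h : weightOn P a < weightOn Q a) :
    ∃ e, Q e ∧ ¬P e ∧ 0 < a e := by
  by_contra! hc
  refine h.not_ge (Finset.sum_le_sum fun e _ => ?_)
  by_cases hQ : Q e <;> by_cases hP : P e <;> simp_all

end WeightOn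

lemma Finsupp.exists_eq_add_single_one_add_single_one {E : Type*} {a : E →₀ ℕ} {e₁ e₂ : E}
    (he : e₁ ≠ e₂) (h₁ : 0 < a e₁) (h₂ : 0 < a e₂) :
    ∃ c, a = c + single e₁ 1 + single e₂ 1 := by
  obtain ⟨c₁, rfl⟩ := exists_add_of_le (single_le_iff (x := 1).2 h₁)
  have : 0 < c₁ e₂ := by simpa [single_apply, he] using h₂
  obtain ⟨c, rfl⟩ := exists_add_of_le (single_le_iff (x := 1).2 this)
  exact ⟨c, by abel⟩

section Graph

variable {V : Type*} [DecidableEq V] {G : SimpleGraph V} [Fintype G.edgeSet]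

lemma ite_mem_sym2 {M : Type*} [AddMonoid M] {x y : V} (hxy : x ≠ y) (v : V) (n : M) :
    (if v ∈ s(x, y) then n else 0) = (if v = x then n else 0) + (if v = y then n else 0) := by
  by_cases hx : v = x <;> by_cases hy : v = y <;> simp_all

lemma wt_add (a b : G.edgeSet →₀ ℕ) (v : V) : wt G (a + b) v = wt G a v + wt G b v :=
  weightOn_add _ a b

lemma wt_single_edge {x y : V} (h : G.Adj x y) (v : V) :
    wt G (Finsupp.single ⟨s(x, y), h⟩ 1) v = (if v = x then 1 else 0) + (if v = y then 1 else 0) :=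
  (weightOn_single_one _ _).trans (ite_mem_sym2 h.ne v 1)

lemma sum_wt [Fintype V] (a : G.edgeSet →₀ ℕ) : ∑ v, wt G a v = 2 * a.degree := by
  unfold wt
  rw [Finset.sum_comm, Finsupp.degree_eq_sum, Finset.mul_sum]
  refine Finset.sum_congr rfl ?_
  rintro ⟨⟨x, y⟩, he⟩ -
  simp only [ite_mem_sym2 (G.ne_of_adj he), Finset.sum_add_distrib]
  simp [two_mul]

lemma eval_monomial_edgeVal [Fintype V] {R : Type*} [CommSemiring R] (x : V → R)
    (a : G.edgeSet →₀ ℕ) :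
    eval (fun e : G.edgeSet => edgeVal x e) (monomial a 1) = ∏ v, x v ^ wt G a v := by
  simp only [eval_monomial, one_mul, Finsupp.prod_fintype _ _ fun _ => pow_zero _, wt,
    ← Finset.prod_pow_eq_pow_sum]
  rw [Finset.prod_comm]
  refine Finset.prod_congr rfl ?_
  rintro ⟨⟨y, z⟩, he⟩ -
  simp only [ite_mem_sym2 (G.ne_of_adj he), pow_add, Finset.prod_mul_distrib, pow_ite, pow_zero]
  simp [edgeVal, mul_pow]

lemma monomial_sub_mem_vanishingIdeal [Fintype V] {K : Type*} [Field K] {a b : G.edgeSet →₀ ℕ}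
    (h : ∀ v, wt G b v = wt G a v) :
    (monomial a 1 : MvPolynomial G.edgeSet K) - monomial b 1 ∈ vanishingIdeal K G := by
  have hdeg : b.degree = a.degree := by
    have := sum_wt (G := G) b
    rw [Finset.sum_congr rfl fun v _ => h v, sum_wt] at this
    omega
  refine Ideal.subset_span ⟨⟨a.degree, (isHomogeneous_monomial 1 rfl).sub
    (isHomogeneous_monomial 1 hdeg)⟩, fun x => ?_⟩
  simp only [map_sub, eval_monomial_edgeVal, h, sub_self]

end Graph

section Swap

variable {V ι : Type*} {G : SimpleGraph V} [Fintype G.edgeSet] {p : V → ι} {j : ι} {u : V}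

lemma totalWtAvoiding_eq_weightOn (a : G.edgeSet →₀ ℕ) :
    totalWtAvoiding G p j a = weightOn (fun e : G.edgeSet => ∀ v ∈ (e : Sym2 V), p v ≠ j) a :=
  rfl

variable [DecidableEq V]

lemma wtAtAvoiding_eq_weightOn (a : G.edgeSet →₀ ℕ) :
    wtAtAvoiding G p j u a =
      weightOn (fun e : G.edgeSet => u ∈ (e : Sym2 V) ∧ ∀ v ∈ (e : Sym2 V), p v ≠ j) a := by
  unfold wtAtAvoiding weightOn
  congr!

lemma wtAtAvoiding_le_wt (a : G.edgeSet →₀ ℕ) : wtAtAvoiding G p j u a ≤ wt G a u := by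
  rw [wtAtAvoiding_eq_weightOn]
  exact weightOn_mono _ _ (fun _ h => h.1) a

lemma wtAtAvoiding_le_totalWtAvoiding (a : G.edgeSet →₀ ℕ) :
    wtAtAvoiding G p j u a ≤ totalWtAvoiding G p j a := by
  rw [wtAtAvoiding_eq_weightOn, totalWtAvoiding_eq_weightOn]
  exact weightOn_mono _ _ (fun _ h => h.2) a

lemma weights_swap_edges (huj : p u ≠ j) {z w w' : V} (hz : p z = j) (hwj : p w ≠ j)
    (hw'j : p w' ≠ j) (hw'u : w' ≠ u) (huz : G.Adj u z) (hww' : G.Adj w w') (huw : G.Adj u w)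
    (hzw' : G.Adj z w') (c : G.edgeSet →₀ ℕ) :
    let a := c + .single ⟨s(u, z), huz⟩ 1 + .single ⟨s(w, w'), hww'⟩ 1
    let a' := c + .single ⟨s(u, w), huw⟩ 1 + .single ⟨s(z, w'), hzw'⟩ 1
    (∀ v, wt G a' v = wt G a v) ∧ totalWtAvoiding G p j a' = totalWtAvoiding G p j a ∧
      wtAtAvoiding G p j u a' = wtAtAvoiding G p j u a + 1 := by
  intro a a'
  refine ⟨fun v => ?_, ?_, ?_⟩
  · simp only [a, a', wt_add, wt_single_edge]
    omega
  · simp only [a, a', totalWtAvoiding_eq_weightOn, weightOn_add, weightOn_single_one]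
    simp [huj, hz, hwj, hw'j]
  · simp only [a, a', wtAtAvoiding_eq_weightOn, weightOn_add, weightOn_single_one]
    simp [huj, hz, hwj, hw'j, hw'u.symm, huz.ne, huw.ne]

lemma exists_swap_edges (hAdj : ∀ x y, G.Adj x y ↔ p x ≠ p y) (huj : p u ≠ j) {a : G.edgeSet →₀ ℕ}
    (hdeg : wtAtAvoiding G p j u a < wt G a u)
    (htot : wtAtAvoiding G p j u a < totalWtAvoiding G p j a) :
    ∃ a' : G.edgeSet →₀ ℕ, (∀ v, wt G a' v = wt G a v) ∧
      totalWtAvoiding G p j a' = totalWtAvoiding G p j a ∧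
      wtAtAvoiding G p j u a' = wtAtAvoiding G p j u a + 1 := by
  rw [wtAtAvoiding_eq_weightOn] at hdeg htot
  rw [totalWtAvoiding_eq_weightOn] at htot
  obtain ⟨⟨e₁, he₁⟩, hue₁, hav₁, hpos₁⟩ := exists_pos_of_weightOn_lt _ _ hdeg
  obtain ⟨⟨⟨w, w'⟩, he₂⟩, hav₂, hue₂, hpos₂⟩ := exists_pos_of_weightOn_lt _ _ htot
  obtain ⟨z, rfl⟩ := Sym2.mem_iff_exists.1 hue₁
  have hz : p z = j := by simpa [huj] using hav₁
  simp only [Sym2.mem_iff, forall_eq_or_imp, forall_eq] at hav₂ hue₂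
  obtain ⟨hwj, hw'j⟩ := hav₂
  have hwu : w ≠ u := by rintro rfl; simp_all
  have hw'u : w' ≠ u := by rintro rfl; simp_all
  clear hue₂
  wlog hwpu : p w ≠ p u generalizing w w'
  · have hw'pu : p w' ≠ p u := fun h => (hAdj w w').1 he₂ (by rw [not_not.1 hwpu, h])
    have hswap : (⟨s(w', w), (G.mem_edgeSet.1 he₂).symm⟩ : G.edgeSet) = ⟨s(w, w'), he₂⟩ :=
      Subtype.ext Sym2.eq_swap
    exact this w' w _ (hswap ▸ hpos₂) hw'j hwj hw'u hwu hw'pu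
  have hne : (⟨s(u, z), he₁⟩ : G.edgeSet) ≠ ⟨s(w, w'), he₂⟩ := fun h => by
    have hu : u ∈ s(w, w') := (Subtype.mk.inj h).symm ▸ Sym2.mem_mk_left u z
    simp [hwu.symm, hw'u.symm] at hu
  obtain ⟨c, rfl⟩ := Finsupp.exists_eq_add_single_one_add_single_one hne hpos₁ hpos₂
  exact ⟨_, weights_swap_edges huj hz hwj hw'j hw'u he₁ he₂ ((hAdj u w).2 (Ne.symm hwpu))
    ((hAdj z w').2 (hz ▸ hw'j.symm)) c⟩

lemma exists_wt_eq_wtAtAvoiding_eq_min (hAdj : ∀ x y, G.Adj x y ↔ p x ≠ p y) (huj : p u ≠ j)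
    (a : G.edgeSet →₀ ℕ) :
    ∃ b : G.edgeSet →₀ ℕ, (∀ v, wt G b v = wt G a v) ∧
      wtAtAvoiding G p j u b = min (wt G a u) (totalWtAvoiding G p j a) := by
  obtain ⟨n, hn⟩ : ∃ n, min (wt G a u) (totalWtAvoiding G p j a) - wtAtAvoiding G p j u a = n :=
    ⟨_, rfl⟩
  induction n generalizing a with
  | zero =>
    refine ⟨a, fun _ => rfl, ?_⟩
    have := wtAtAvoiding_le_wt (p := p) (j := j) (u := u) a
    have := wtAtAvoiding_le_totalWtAvoiding (p := p) (j := j) (u := u) a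
    omega
  | succ n ih =>
    obtain ⟨a', hwt, htot, hat⟩ := exists_swap_edges hAdj huj (a := a) (by omega) (by omega)
    obtain ⟨b, hb, hbu⟩ := ih a' (by rw [hat, htot, hwt]; omega)
    exact ⟨b, fun v => (hb v).trans (hwt v), by rw [hbu, hwt, htot]⟩

end Swap

theorem statement7_general {V ι K : Type*} [Fintype V] [DecidableEq V] [Field K] (p : V → ι)
    (G : SimpleGraph V) [Fintype G.edgeSet] (hAdj : ∀ x y, G.Adj x y ↔ p x ≠ p y)
    (a : G.edgeSet →₀ ℕ) (i j : ι) (hij : i ≠ j) (u : V) (hu : p u = i) :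
    ∃ b : G.edgeSet →₀ ℕ,
      ((monomial a 1 : MvPolynomial G.edgeSet K) - monomial b 1) ∈ vanishingIdeal K G ∧
      (∀ v, wt G b v = wt G a v) ∧
      wtAtAvoiding G p j u b = min (wt G a u) (totalWtAvoiding G p j a) := by
  obtain ⟨b, hwt, hat⟩ := exists_wt_eq_wtAtAvoiding_eq_min hAdj (hu ▸ hij) a
  exact ⟨b, monomial_sub_mem_vanishingIdeal hwt, hwt, hat⟩

/-- (Swapping endpoints of edges.)  Let `t^a` be a monomial, `i ≠ j`
parts, `u ∈ P_i`, let `Δ` be the total weight of edges of `H_{t^a}` avoiding `P_j` and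
`δ(c)` the total weight of edges of `H_{t^c}` joining `u` to a vertex outside `P_j`.
If `H_{t^a}` has an edge `{w₁, w₂}` with `w₁, w₂ ∉ P_j` and `w₁, w₂ ≠ u`, then there is
`t^b` with `t^a - t^b ∈ I(X)`, all weighted degrees unchanged, and
`δ(b) = min (wt_{t^a}(u)) Δ`. -/
theorem statement7 {V ι K : Type*} [Fintype V] [DecidableEq V] [Fintype ι] [DecidableEq ι]
    [Field K] [Fintype K]
    (p : V → ι) (hp : Function.Surjective p) (hr : 2 ≤ Fintype.card ι)
    (G : SimpleGraph V) [Fintype G.edgeSet] (hAdj : ∀ x y, G.Adj x y ↔ p x ≠ p y)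
    (a : G.edgeSet →₀ ℕ) (i j : ι) (hij : i ≠ j) (u : V) (hu : p u = i)
    (w₁ w₂ : V) (hw : G.Adj w₁ w₂) (hw₁ : p w₁ ≠ j) (hw₂ : p w₂ ≠ j)
    (hw₁u : w₁ ≠ u) (hw₂u : w₂ ≠ u)
    (hpos : 1 ≤ a ⟨s(w₁, w₂), G.mem_edgeSet.mpr hw⟩) :
    ∃ b : G.edgeSet →₀ ℕ,
      ((monomial a 1 : MvPolynomial G.edgeSet K) - monomial b 1) ∈ vanishingIdeal K G ∧
      (∀ v, wt G b v = wt G a v) ∧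
      wtAtAvoiding G p j u b = min (wt G a u) (totalWtAvoiding G p j a) :=
  statement7_general p G hAdj a i j hij u hu
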